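/- Let k be a field with a non-trivial absolute value |·| and let n ≥ 1. Let Φ denote the flow on the hybrid affine space: Φ(x,α) = x^α for x a multiplicative seminorm on k[T₁,…,Tₙ] bounded by ‖·‖_hyb and α ∈ I*_x. Then Φ is continuous and open: for every x, α in the domain and every basic open neighborhood W of (x,α) of the form {y : rᵢ < y(Pᵢ) < sᵢ, i=1..m} × (β,γ) intersected with the domain, Φ(W) contains a basic open neighborhood of x^α of the form {z : rᵢ' < z(Pᵢ) < sᵢ'} (intersected with a condition on the projection ε(z) when α < 1). -/

import Mathlib

open Classical in
/-- The trivial absolute value on a field: `0 ↦ 0`, nonzero `↦ 1`. -/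
noncomputable def trivAbs {k : Type*} [Field k] (a : k) : ℝ := if a = 0 then 0 else 1

/-- A multiplicative seminorm on `k[T₁,…,Tₙ]` bounded by the hybrid norm
`max(|·|₀, |·|)` on `k`, i.e. a point of the hybrid affine space `𝔸ⁿ_hyb`. -/
def IsBddSeminorm {k : Type*} [Field k] (f : AbsoluteValue k ℝ) (n : ℕ)
    (x : MvPolynomial (Fin n) k → ℝ) : Prop :=
  (∀ P, 0 ≤ x P) ∧ x 0 = 0 ∧ x 1 = 1 ∧
  (∀ P Q, x (P * Q) = x P * x Q) ∧
  (∀ P Q, x (P + Q) ≤ x P + x Q) ∧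
  (∀ a : k, x (MvPolynomial.C a) ≤ max (trivAbs a) (f a))

/-- The hybrid affine space, with the coarsest topology making `x ↦ x(P)`
continuous for every polynomial `P` (induced from the product topology). -/
def HybAffine {k : Type*} [Field k] (f : AbsoluteValue k ℝ) (n : ℕ) : Type _ :=
  {x : MvPolynomial (Fin n) k → ℝ // IsBddSeminorm f n x}

instance {k : Type*} [Field k] (f : AbsoluteValue k ℝ) (n : ℕ) :
    TopologicalSpace (HybAffine f n) :=
  instTopologicalSpaceSubtype

/-- The domain of the flow: pairs `(x, α)` with `α ∈ I*_x`, i.e. `α > 0` and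
`x^α` again a bounded multiplicative seminorm. -/
def FlowDom {k : Type*} [Field k] (f : AbsoluteValue k ℝ) (n : ℕ) :
    Set (HybAffine f n × ℝ) :=
  {p | 0 < p.2 ∧ IsBddSeminorm f n fun P => p.1.1 P ^ p.2}

/-- The flow `Φ(x, α) = x^α`. -/
noncomputable def flow {k : Type*} [Field k] (f : AbsoluteValue k ℝ) (n : ℕ)
    (p : FlowDom f n) : HybAffine f n :=
  ⟨fun P => p.1.1.1 P ^ p.1.2, p.2.2⟩


/-!
On constants, a point `x` of the hybrid affine space is a power `f ^ t`, `t ≥ 0`: it is either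
trivial there or an absolute value equivalent to `f`. So when `t * β ≤ 1`, `x ^ β` is still
bounded on constants and satisfies `x (m) ^ β ≤ m` on integers, and Artin's trick makes it
subadditive again. For openness at `(x, α)`, fix `a₀` with `f a₀ > 1` and take `γ > α` close to
`α`: on the open set `{z | z (C a₀) < f a₀ ^ γ}`, which contains `x ^ α`, the map
`z ↦ (z ^ (1 / γ), γ)` is a continuous right inverse of the flow, and it sends `x ^ α` to
`(x ^ (α / γ), γ)`, which is close to `(x, α)`.
-/

open MvPolynomial Real Filter Topology

theorem Real.rpow_le_max_one_self {y s : ℝ} (hy : 0 ≤ y) (hs₀ : 0 ≤ s) (hs₁ : s ≤ 1) :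
    y ^ s ≤ max 1 y := by
  rcases le_total y 1 with h | h
  · exact (rpow_le_one hy h hs₀).trans (le_max_left _ _)
  · calc y ^ s ≤ y ^ (1 : ℝ) := rpow_le_rpow_of_exponent_le h hs₁
      _ = y := rpow_one y
      _ ≤ max 1 y := le_max_right _ _

theorem Real.le_of_forall_pow_le_succ_mul_pow {a b : ℝ}
    (h : ∀ m : ℕ, a ^ m ≤ (m + 1) * b ^ m) : a ≤ b := by
  by_contra! hba
  have hb₀ : 0 < b := by
    have h₁ := h 1
    push_cast at h₁
    linarith
  have ha₀ : 0 < a := hb₀.trans hba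
  set r := b / a
  have hr₀ : 0 ≤ r := by positivity
  have hr₁ : r < 1 := (div_lt_one ha₀).2 hba
  have hlim : Tendsto (fun m : ℕ => m * r ^ m + r ^ m) atTop (𝓝 0) := by
    simpa using (tendsto_self_mul_const_pow_of_lt_one hr₀ hr₁).add
      (tendsto_pow_atTop_nhds_zero_of_lt_one hr₀ hr₁)
  have hge : ∀ m : ℕ, 1 ≤ m * r ^ m + r ^ m := fun m => by
    rw [← add_one_mul, div_pow, mul_div_assoc', one_le_div (pow_pos ha₀ m)]
    exact h m
  linarith [ge_of_tendsto' hlim hge]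

/-- Artin's trick: taking `m`-th powers turns the binomial expansion of `(P + Q) ^ m`, whose
`m + 1` terms are each at most `(v P ^ β + v Q ^ β) ^ (m / β)`, into the triangle inequality
for `v ^ β`. -/
theorem MulRingSeminorm.rpow_add_le {R : Type*} [CommRing R] (v : MulRingSeminorm R) {β : ℝ}
    (hβ : 0 < β) (hnat : ∀ m : ℕ, v m ^ β ≤ m) (P Q : R) :
    v (P + Q) ^ β ≤ v P ^ β + v Q ^ β := by
  set D := v P ^ β + v Q ^ β
  have hD : 0 ≤ D := by positivity
  set d := D ^ β⁻¹
  have hd : d ^ β = D := rpow_inv_rpow hD hβ.ne'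
  have hterm : ∀ m i, i ∈ Finset.range (m + 1) →
      v (P ^ i * Q ^ (m - i) * (m.choose i : R)) ≤ d ^ m := by
    intro m i hi
    rw [← rpow_le_rpow_iff (apply_nonneg v _) (by positivity) hβ, ← rpow_pow_comm (by positivity),
      hd, add_pow]
    calc v (P ^ i * Q ^ (m - i) * (m.choose i : R)) ^ β
        = (v P ^ β) ^ i * (v Q ^ β) ^ (m - i) * v (m.choose i : R) ^ β := by
          simp only [map_mul, map_pow]
          rw [mul_rpow (by positivity) (apply_nonneg v _), mul_rpow (by positivity) (by positivity),
            rpow_pow_comm (apply_nonneg v _), rpow_pow_comm (apply_nonneg v _)]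
      _ ≤ (v P ^ β) ^ i * (v Q ^ β) ^ (m - i) * (m.choose i : ℝ) := by
          gcongr
          exact hnat _
      _ ≤ ∑ j ∈ Finset.range (m + 1), (v P ^ β) ^ j * (v Q ^ β) ^ (m - j) * (m.choose j : ℝ) :=
          Finset.single_le_sum
            (f := fun j => (v P ^ β) ^ j * (v Q ^ β) ^ (m - j) * (m.choose j : ℝ))
            (fun j _ => by positivity) hi
  have hpow : ∀ m : ℕ, v (P + Q) ^ m ≤ (m + 1) * d ^ m := by
    intro m
    calc v (P + Q) ^ m
        = v (∑ i ∈ Finset.range (m + 1), P ^ i * Q ^ (m - i) * (m.choose i : R)) := by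
          rw [← map_pow, add_pow]
      _ ≤ ∑ i ∈ Finset.range (m + 1), v (P ^ i * Q ^ (m - i) * (m.choose i : R)) :=
          Finset.le_sum_of_subadditive v (map_zero v).le (map_add_le_add v) _ _
      _ ≤ ∑ _i ∈ Finset.range (m + 1), d ^ m := Finset.sum_le_sum (hterm m)
      _ = (m + 1) * d ^ m := by simp
  calc v (P + Q) ^ β ≤ d ^ β :=
        rpow_le_rpow (apply_nonneg v _) (le_of_forall_pow_le_succ_mul_pow hpow)
          hβ.le
    _ = D := hd

namespace IsBddSeminorm

variable {k : Type*} [Field k] {f : AbsoluteValue k ℝ} {n : ℕ}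
  {x : MvPolynomial (Fin n) k → ℝ}

theorem nonneg (hx : IsBddSeminorm f n x) (P : MvPolynomial (Fin n) k) : 0 ≤ x P := hx.1 P

theorem apply_zero (hx : IsBddSeminorm f n x) : x 0 = 0 := hx.2.1

theorem apply_one (hx : IsBddSeminorm f n x) : x 1 = 1 := hx.2.2.1

theorem apply_mul (hx : IsBddSeminorm f n x) (P Q : MvPolynomial (Fin n) k) :
    x (P * Q) = x P * x Q := hx.2.2.2.1 P Q

theorem apply_add_le (hx : IsBddSeminorm f n x) (P Q : MvPolynomial (Fin n) k) :
    x (P + Q) ≤ x P + x Q := hx.2.2.2.2.1 P Q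

theorem apply_C_le (hx : IsBddSeminorm f n x) {a : k} (ha : a ≠ 0) : x (C a) ≤ max 1 (f a) := by
  simpa [trivAbs, ha] using hx.2.2.2.2.2 a

theorem apply_neg (hx : IsBddSeminorm f n x) (P : MvPolynomial (Fin n) k) : x (-P) = x P := by
  have hsq : x (-1) * x (-1) = 1 := by rw [← hx.apply_mul, neg_one_mul, neg_neg, hx.apply_one]
  have h₁ : x (-1) = 1 := by nlinarith [hx.nonneg (-1)]
  rw [neg_eq_neg_one_mul, hx.apply_mul, h₁, one_mul]

noncomputable def toMulRingSeminorm (hx : IsBddSeminorm f n x) :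
    MulRingSeminorm (MvPolynomial (Fin n) k) where
  toFun := x
  map_zero' := hx.apply_zero
  add_le' := hx.apply_add_le
  neg' := hx.apply_neg
  map_one' := hx.apply_one
  map_mul' := hx.apply_mul

noncomputable def constAbs (hx : IsBddSeminorm f n x) : AbsoluteValue k ℝ where
  toFun a := x (C a)
  map_mul' a b := by rw [map_mul, hx.apply_mul]
  nonneg' a := hx.nonneg _
  eq_zero' a := by
    refine ⟨fun h => by_contra fun ha => ?_, fun h => by rw [h, C_0, hx.apply_zero]⟩
    have : x (C a) * x (C a⁻¹) = 1 := by rw [← hx.apply_mul, ← map_mul, mul_inv_cancel₀ ha,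
      C_1, hx.apply_one]
    simp [h] at this
  add_le' a b := by rw [map_add]; exact hx.apply_add_le _ _

theorem lt_one_of_constAbs_lt_one (hx : IsBddSeminorm f n x) {a : k} (h : hx.constAbs a < 1) :
    f a < 1 := by
  rcases eq_or_ne a 0 with rfl | ha
  · simp
  have hinv : 1 < x (C a⁻¹) := by
    change 1 < hx.constAbs a⁻¹
    rw [map_inv₀]
    exact (one_lt_inv₀ (hx.constAbs.pos ha)).2 h
  have := hinv.trans_le (hx.apply_C_le (inv_ne_zero ha))
  rw [lt_max_iff, map_inv₀, one_lt_inv₀ (f.pos ha)] at this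
  exact this.resolve_left (lt_irrefl 1)

theorem exists_apply_C_eq_rpow (hx : IsBddSeminorm f n x) :
    ∃ t : ℝ, 0 ≤ t ∧ ∀ a : k, a ≠ 0 → x (C a) = f a ^ t := by
  by_cases hw : hx.constAbs.IsNontrivial
  · obtain ⟨c, hc, hcf⟩ := AbsoluteValue.isEquiv_iff_exists_rpow_eq.1
      (AbsoluteValue.isEquiv_of_lt_one_imp hw fun _ => hx.lt_one_of_constAbs_lt_one)
    refine ⟨c⁻¹, inv_nonneg.2 hc.le, fun a _ => ?_⟩
    change hx.constAbs a = _
    rw [← congrFun hcf a, ← rpow_mul (hx.constAbs.nonneg a), mul_inv_cancel₀ hc.ne', rpow_one]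
  · exact ⟨0, le_rfl, fun a ha => by
      rw [rpow_zero]
      exact AbsoluteValue.not_isNontrivial_apply hw ha⟩

theorem rpow (hx : IsBddSeminorm f n x) {t β : ℝ} (ht : 0 ≤ t)
    (hC : ∀ a : k, a ≠ 0 → x (C a) = f a ^ t) (hβ : 0 < β) (htβ : t * β ≤ 1) :
    IsBddSeminorm f n fun P => x P ^ β := by
  have hCβ : ∀ a : k, a ≠ 0 → x (C a) ^ β = f a ^ (t * β) := fun a ha => by
    rw [hC a ha, rpow_mul (f.nonneg a)]
  have hnat : ∀ m : ℕ, hx.toMulRingSeminorm m ^ β ≤ m := by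
    intro m
    change x (m : MvPolynomial (Fin n) k) ^ β ≤ m
    rw [← map_natCast C]
    rcases eq_or_ne (m : k) 0 with hm | hm
    · rw [hm, C_0, hx.apply_zero, zero_rpow hβ.ne']
      exact m.cast_nonneg
    have hm₁ : (1 : ℝ) ≤ m := Nat.one_le_cast.2 (Nat.pos_of_ne_zero fun h => hm (by simp [h]))
    calc x (C (m : k)) ^ β = f m ^ (t * β) := hCβ _ hm
      _ ≤ (m : ℝ) ^ (t * β) := rpow_le_rpow (f.nonneg _) (f.apply_nat_le_self m) (by positivity)
      _ ≤ (m : ℝ) ^ (1 : ℝ) := rpow_le_rpow_of_exponent_le hm₁ htβ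
      _ = m := rpow_one _
  refine ⟨fun P => rpow_nonneg (hx.nonneg P) β, ?_, ?_, fun P Q => ?_,
    hx.toMulRingSeminorm.rpow_add_le hβ hnat, fun a => ?_⟩
  · simp only [hx.apply_zero, zero_rpow hβ.ne']
  · simp only [hx.apply_one, one_rpow]
  · simp only [hx.apply_mul, mul_rpow (hx.nonneg P) (hx.nonneg Q)]
  · rcases eq_or_ne a 0 with rfl | ha
    · simp [hx.apply_zero, zero_rpow hβ.ne', trivAbs]
    simp only [trivAbs, ha, if_false, hCβ a ha]
    exact rpow_le_max_one_self (f.nonneg a) (by positivity) htβ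

theorem rpow_inv_of_apply_C_lt (hx : IsBddSeminorm f n x) {a₀ : k} (ha₀ : 1 < f a₀) {γ : ℝ}
    (hγ : 0 < γ) (h : x (C a₀) < f a₀ ^ γ) : IsBddSeminorm f n fun P => x P ^ γ⁻¹ := by
  obtain ⟨t, ht, hC⟩ := hx.exists_apply_C_eq_rpow
  rw [hC a₀ (f.ne_zero_iff.1 (by linarith)), rpow_lt_rpow_left_iff ha₀] at h
  exact hx.rpow ht hC (inv_pos.2 hγ) (by rw [← div_eq_mul_inv]; exact (div_le_one hγ).2 h.le)

end IsBddSeminorm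

section Flow

variable {k : Type*} [Field k] {f : AbsoluteValue k ℝ} {n : ℕ}

theorem isInducing_flowDom_val_val :
    IsInducing fun p : FlowDom f n => ((p.1.1.1, p.1.2) : (MvPolynomial (Fin n) k → ℝ) × ℝ) :=
  (IsInducing.subtypeVal.prodMap IsInducing.id).comp IsInducing.subtypeVal

theorem continuous_flow : Continuous (flow f n) := by
  have hι := (isInducing_flowDom_val_val (f := f) (n := n)).continuous
  have hval : Continuous fun p : FlowDom f n => p.1.1.1 := continuous_fst.comp hι
  have hexp : Continuous fun p : FlowDom f n => p.1.2 := continuous_snd.comp continuous_subtype_val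
  refine Continuous.subtype_mk (continuous_pi fun P => ?_) _
  exact ((continuous_apply P).comp hval).rpow hexp fun p => Or.inr p.2.1

theorem exists_lt_rpow_div_mem {ι : Type*} (x : ι → ℝ) {α : ℝ} (hα : 0 < α)
    {V : Set ((ι → ℝ) × ℝ)} (hV : V ∈ 𝓝 (x, α)) :
    ∃ γ, α < γ ∧ ((fun i => x i ^ (α / γ)), γ) ∈ V := by
  have hcont : ContinuousAt (fun γ : ℝ => ((fun i => x i ^ (α / γ)), γ)) α :=
    (continuousAt_pi.2 fun i => continuousAt_const.rpow
      (continuousAt_const.div continuousAt_id hα.ne') (Or.inr (div_pos hα hα))).prodMk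
      continuousAt_id
  have hV' : V ∈ 𝓝 ((fun i => x i ^ (α / α)), α) := by simpa [div_self hα.ne'] using hV
  exact (eventually_mem_nhdsWithin.and
    ((hcont.eventually_mem hV').filter_mono nhdsWithin_le_nhds) : ∀ᶠ γ in 𝓝[>] α, _).exists

theorem exists_flow_eq {a₀ : k} (ha₀ : 1 < f a₀) {γ : ℝ} (hγ : 0 < γ) (z : HybAffine f n)
    (hz : z.1 (C a₀) < f a₀ ^ γ) :
    ∃ p : FlowDom f n, p.1.1.1 = (fun P => z.1 P ^ γ⁻¹) ∧ p.1.2 = γ ∧ flow f n p = z := by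
  have hzγ : (fun P => (z.1 P ^ γ⁻¹) ^ γ) = z.1 :=
    funext fun P => rpow_inv_rpow (z.2.nonneg P) hγ.ne'
  refine ⟨⟨(⟨_, z.2.rpow_inv_of_apply_C_lt ha₀ hγ hz⟩, γ), hγ, ?_⟩, rfl, rfl, Subtype.ext hzγ⟩
  change IsBddSeminorm f n fun P => (z.1 P ^ γ⁻¹) ^ γ
  rw [hzγ]
  exact z.2

theorem isOpenMap_flow {a₀ : k} (ha₀ : 1 < f a₀) : IsOpenMap (flow f n) := by
  intro U hU
  obtain ⟨V, hV, rfl⟩ := isInducing_flowDom_val_val.isOpen_iff.1 hU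
  rw [isOpen_iff_mem_nhds]
  rintro _ ⟨⟨⟨x, α⟩, hα, hxα⟩, hpV, rfl⟩
  obtain ⟨γ, hαγ, hγV⟩ := exists_lt_rpow_div_mem x.1 hα (hV.mem_nhds hpV)
  have hγ : 0 < γ := hα.trans hαγ
  set W : Set (HybAffine f n) := {z | z.1 (C a₀) < f a₀ ^ γ ∧ ((fun P => z.1 P ^ γ⁻¹), γ) ∈ V}
  have hW : IsOpen W := by
    refine ((continuous_apply _).comp continuous_subtype_val).isOpen_preimage _ isOpen_Iio |>.inter
      (hV.preimage ?_)
    exact (continuous_pi fun P => ((continuous_apply P).comp continuous_subtype_val).rpow_const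
      fun _ => Or.inr (inv_pos.2 hγ).le).prodMk continuous_const
  have hxW : flow f n ⟨(x, α), hα, hxα⟩ ∈ W := by
    refine ⟨?_, ?_⟩
    · calc x.1 (C a₀) ^ α ≤ f a₀ ^ α := by
            refine rpow_le_rpow (x.2.nonneg _) ?_ hα.le
            exact (x.2.apply_C_le (f.ne_zero_iff.1 (by linarith))).trans_eq (max_eq_right ha₀.le)
        _ < f a₀ ^ γ := rpow_lt_rpow_of_exponent_lt ha₀ hαγ
    · simpa [flow, ← rpow_mul (x.2.nonneg _), div_eq_mul_inv] using hγV
  refine mem_of_superset (hW.mem_nhds hxW) fun z hz => ?_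
  obtain ⟨p, hp₁, hp₂, hpz⟩ := exists_flow_eq ha₀ hγ z hz.1
  exact ⟨p, by simpa [hp₁, hp₂] using hz.2, hpz⟩

end Flow

theorem stmt19_general {k : Type*} [Field k] (f : AbsoluteValue k ℝ)
    (hf : ∃ a : k, f a ≠ 0 ∧ f a ≠ 1) (n : ℕ) :
    Continuous (flow f n) ∧ IsOpenMap (flow f n) := by
  obtain ⟨a, ha₀, ha₁⟩ := hf
  obtain ⟨a₀, h₀⟩ := AbsoluteValue.IsNontrivial.exists_abv_gt_one ⟨a, f.ne_zero_iff.1 ha₀, ha₁⟩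
  exact ⟨continuous_flow, isOpenMap_flow h₀⟩

/-- For a field `k` with a non-trivial absolute value, the flow on the hybrid
affine space `𝔸ⁿ_hyb` is continuous and open. -/
theorem stmt19 {k : Type*} [Field k] (f : AbsoluteValue k ℝ)
    (hf : ∃ a : k, f a ≠ 0 ∧ f a ≠ 1) (n : ℕ) (hn : 1 ≤ n) :
    Continuous (flow f n) ∧ IsOpenMap (flow f n) :=
  stmt19_general f hf n
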